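/- There exist σ > 0, L > 0 and s₁ > 0 such that for every s₀ ≥ s₁, every t ≥ s₀, and all continuous functions X, Y : [s₀,t] → ℝ satisfying X(s) ≥ (m(t)/t)·s − s^{(1+ε)/2} and |Y(s)| ≤ σ·s for every s ∈ [s₀, t], one has ∫_{s₀}^t b(θ(X(s), Y(s))) ds ≥ (t − s₀) − β ∫_{s₀}^t |Y(s)/(√2·s)|^α · (1 + min(L·(|Y(s)/s|^{2−α} + s^{−(1−ε)/2}), 1)) ds. -/

import Mathlib

/-!
Along such a trajectory the first coordinate is close to `√2 s`: since
`m(t)/t = √2 - O(t^{-κ} + log t / t)` and `t^{-κ} ≤ s^{-κ}` for `s ≤ t`, one gets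
`X s ≥ √2 s (1 - C s^{-(1-ε)/2})`. Hence the angle satisfies `|θ| ≤ |Y s| / X s`, which is
`|Y s / (√2 s)|` up to a factor `1 + O(s^{-(1-ε)/2})`, and (A2) gives
`b θ ≥ 1 - β |θ|^α - K θ²` with `θ² ≤ 4 |Y s/(√2 s)|^α |Y s/s|^{2-α}`. Both error terms are
absorbed into `L (|Y s/s|^{2-α} + s^{-(1-ε)/2})`, which the choice of `σ` and `s₁` keeps at most
`1`, so the `min` is inactive. Integrating the pointwise bound over `[s₀, t]` gives the claim.
-/

open MeasureTheory

/-- The angular coordinate of the point `(x, y) ∈ ℝ²`, valued in `(-π, π]`. -/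
noncomputable def angle (x y : ℝ) : ℝ := Complex.arg ((x : ℂ) + (y : ℂ) * Complex.I)

/-- The constant `ϑ₁ = λ₀ β^{2/(2+α)} 2^{-2α/(2+α)} / (1-κ)` with `κ = 2α/(2+α)`. -/
noncomputable def theta1 (α β lam₀ : ℝ) : ℝ :=
  lam₀ * β ^ (2 / (2 + α)) * (2:ℝ) ^ (-(2 * α / (2 + α))) / (1 - 2 * α / (2 + α))

/-- The centering `m(t) = √2 t - (ϑ₁/√2) t^{(2-α)/(2+α)} - (3/(2√2) - α/(2√2(2+α))) log t`. -/
noncomputable def mCenter (α β lam₀ t : ℝ) : ℝ :=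
  Real.sqrt 2 * t - theta1 α β lam₀ / Real.sqrt 2 * t ^ ((2 - α) / (2 + α))
    - (3 / (2 * Real.sqrt 2) - α / (2 * Real.sqrt 2 * (2 + α))) * Real.log t

open Real Set

theorem abs_angle_le {x y : ℝ} (hx : 0 < x) : |angle x y| ≤ |y| / x := by
  set z : ℂ := x + y * Complex.I
  have hre : z.re = x := by simp [z]
  have him : z.im = y := by simp [z]
  have hlt : |z.arg| < π / 2 := Complex.abs_arg_lt_pi_div_two_iff.2 (Or.inl (hre ▸ hx))
  calc |angle x y| = |z.arg| := rfl
    _ ≤ tan |z.arg| := le_tan (abs_nonneg _) hlt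
    _ ≤ |tan z.arg| := by
      rcases abs_choice z.arg with h | h
      · rw [h]; exact le_abs_self _
      · rw [h, tan_neg]; exact neg_le_abs _
    _ = |y| / x := by rw [Complex.tan_arg, hre, him, abs_div, abs_of_pos hx]

theorem measurable_angle : Measurable (Function.uncurry angle) := by
  unfold angle Function.uncurry
  fun_prop

theorem rpow_le_one_add_six_mul {r δ α : ℝ} (hr : 0 ≤ r) (hδ : 0 ≤ δ) (hδ' : δ ≤ 1 / 2)
    (hrδ : r * (1 - δ) ≤ 1) (hα : 0 ≤ α) (hα' : α ≤ 2) : r ^ α ≤ 1 + 6 * δ := by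
  rcases le_or_gt r 1 with h | h
  · linarith [rpow_le_one hr h hα]
  · calc r ^ α ≤ r ^ (2 : ℝ) := rpow_le_rpow_of_exponent_le h.le hα'
      _ = r ^ 2 := rpow_two r
      _ ≤ 1 + 6 * δ := by
        -- `(1 + 6δ)(1 - δ)² - 1 = δ (1 - 2δ) (4 - 3δ)`
        nlinarith [mul_nonneg (mul_nonneg hδ (by linarith : (0:ℝ) ≤ 1 - 2 * δ))
          (by linarith : (0:ℝ) ≤ 4 - 3 * δ), mul_nonneg hr hδ,
          mul_le_mul hrδ hrδ (by nlinarith) zero_le_one]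

theorem abs_angle_rpow_le {x y c δ α : ℝ} (hc : 0 < c) (hδ : 0 ≤ δ) (hδ' : δ ≤ 1 / 2)
    (hx : c * (1 - δ) ≤ x) (hα : 0 ≤ α) (hα' : α ≤ 2) :
    |angle x y| ^ α ≤ (|y| / c) ^ α * (1 + 6 * δ) := by
  have hx0 : 0 < x := by nlinarith
  calc |angle x y| ^ α ≤ (|y| / c * (c / x)) ^ α := by
        gcongr
        calc |angle x y| ≤ |y| / x := abs_angle_le hx0
          _ = |y| / c * (c / x) := by field_simp
    _ = (|y| / c) ^ α * (c / x) ^ α := mul_rpow (by positivity) (by positivity)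
    _ ≤ (|y| / c) ^ α * (1 + 6 * δ) := by
        gcongr
        refine rpow_le_one_add_six_mul (by positivity) hδ hδ' ?_ hα hα'
        rw [div_mul_eq_mul_div, div_le_one hx0]
        exact hx

theorem rpow_div_self_le_rpow_neg {p q s t : ℝ} (hp : 0 ≤ p) (hpq : p ≤ 1 - q) (hs : 1 ≤ s)
    (hst : s ≤ t) : t ^ q / t ≤ s ^ (-p) := by
  calc t ^ q / t = t ^ (q - 1) := (rpow_sub_one (by linarith) q).symm
    _ ≤ s ^ (q - 1) := rpow_le_rpow_of_nonpos (by linarith) hst (by linarith)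
    _ ≤ s ^ (-p) := rpow_le_rpow_of_exponent_le hs (by linarith)

theorem log_div_self_le_two_mul_rpow_neg {p s t : ℝ} (hp : 0 ≤ p) (hp' : p ≤ 1 / 2)
    (hs : 1 ≤ s) (hst : s ≤ t) : log t / t ≤ 2 * s ^ (-p) := by
  have ht : 0 < t := by linarith
  calc log t / t ≤ t ^ (1 / 2 : ℝ) / (1 / 2) / t := by
        gcongr
        exact log_le_rpow_div ht.le (by norm_num)
    _ = 2 * (t ^ (1 / 2 : ℝ) / t) := by ring
    _ ≤ 2 * s ^ (-p) := by
        gcongr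
        exact rpow_div_self_le_rpow_neg hp (by linarith) hs hst

theorem mCenter_div_self_ge {α β lam₀ p s t : ℝ} (hα : 0 ≤ α) (hp : 0 ≤ p) (hp' : p ≤ 1 / 2)
    (hpα : p ≤ 2 * α / (2 + α)) (hs : 1 ≤ s) (hst : s ≤ t) :
    √2 - (|theta1 α β lam₀| + 4) * s ^ (-p) ≤ mCenter α β lam₀ t / t := by
  have ht : 0 < t := by linarith
  have hsqrt : 1 ≤ √2 := one_le_sqrt.2 one_le_two
  have hκ : 1 - (2 - α) / (2 + α) = 2 * α / (2 + α) := by field_simp; ring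
  have hpow : t ^ ((2 - α) / (2 + α)) / t ≤ s ^ (-p) :=
    rpow_div_self_le_rpow_neg hp (hκ ▸ hpα) hs hst
  have hlog := log_div_self_le_two_mul_rpow_neg hp hp' hs hst
  have hlog0 : 0 ≤ log t / t := div_nonneg (log_nonneg (hs.trans hst)) ht.le
  have hϑ : theta1 α β lam₀ / √2 * (t ^ ((2 - α) / (2 + α)) / t)
      ≤ |theta1 α β lam₀| * s ^ (-p) := by
    have : theta1 α β lam₀ / √2 ≤ |theta1 α β lam₀| :=
      (div_le_self (abs_nonneg _) hsqrt).trans'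
        (div_le_div_of_nonneg_right (le_abs_self _) (by positivity))
    exact mul_le_mul this hpow (by positivity) (abs_nonneg _)
  have hc : 3 / (2 * √2) - α / (2 * √2 * (2 + α)) ≤ 2 := by
    have : 3 / (2 * √2) ≤ 3 / 2 := by gcongr; linarith
    have : 0 ≤ α / (2 * √2 * (2 + α)) := by positivity
    linarith
  have hm : mCenter α β lam₀ t / t
      = √2 - theta1 α β lam₀ / √2 * (t ^ ((2 - α) / (2 + α)) / t)
        - (3 / (2 * √2) - α / (2 * √2 * (2 + α))) * (log t / t) := by
    unfold mCenter
    field_simp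
  linarith [mul_le_mul_of_nonneg_right hc hlog0]

theorem sqrt_two_mul_one_sub_le_of_mCenter_le {α β lam₀ p s t x : ℝ} (hα : 0 ≤ α) (hp : 0 ≤ p)
    (hp' : p ≤ 1 / 2) (hpα : p ≤ 2 * α / (2 + α)) (hs : 1 ≤ s) (hst : s ≤ t)
    (hx : mCenter α β lam₀ t / t * s - s ^ (1 - p) ≤ x) :
    √2 * s * (1 - (|theta1 α β lam₀| + 5) * s ^ (-p)) ≤ x := by
  have hs0 : 0 < s := by linarith
  have hsp : s ^ (1 - p) = s * s ^ (-p) := by rw [sub_eq_add_neg, rpow_add hs0, rpow_one]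
  have hm := mul_le_mul_of_nonneg_right
    (mCenter_div_self_ge (β := β) (lam₀ := lam₀) hα hp hp' hpα hs hst) hs0.le
  have hsE : 0 ≤ (|theta1 α β lam₀| + 5) * (s * s ^ (-p)) := by positivity
  linarith [mul_le_mul_of_nonneg_right (one_le_sqrt.2 one_le_two) hsE]

theorem one_sub_le_comp_angle {b : ℝ → ℝ} {α β K σ₀ C L E s x y : ℝ}
    (hb : ∀ θ, |θ| ≤ σ₀ → |b θ - (1 - β * |θ| ^ α)| ≤ K * θ ^ 2)
    (hα : 0 < α) (hα' : α < 2) (hβ : 0 ≤ β) (hK : 0 ≤ K) (hC : 0 ≤ C) (hE : 0 ≤ E)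
    (hCE : C * E ≤ 1 / 2) (hL : 6 * C * β + 4 * K ≤ β * L) (hs : 0 < s)
    (hx : √2 * s * (1 - C * E) ≤ x) (hy : 2 * |y / s| ≤ σ₀)
    (hLE : L * (|y / s| ^ (2 - α) + E) ≤ 1) :
    1 - β * (|y / (√2 * s)| ^ α * (1 + min (L * (|y / s| ^ (2 - α) + E)) 1))
      ≤ b (angle x y) := by
  have hc : 0 < √2 * s := by positivity
  have hx0 : 0 < x := by nlinarith
  have ha : |y / (√2 * s)| = |y| / (√2 * s) := by rw [abs_div, abs_of_pos hc]
  have hw : |y / s| = |y| / s := by rw [abs_div, abs_of_pos hs]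
  set θ := angle x y
  set a := |y / (√2 * s)|
  set w := |y / s|
  have haw : a ≤ w := by
    rw [ha, hw]
    gcongr
    exact le_mul_of_one_le_left hs.le (one_le_sqrt.2 one_le_two)
  have hθa : |θ| ≤ 2 * a := by
    calc |θ| ≤ |y| / x := abs_angle_le hx0
      _ ≤ |y| / (√2 * s / 2) := by gcongr; nlinarith
      _ = 2 * a := by rw [ha]; field_simp
  have hθα : |θ| ^ α ≤ a ^ α * (1 + 6 * (C * E)) := by
    rw [ha]; exact abs_angle_rpow_le hc (by positivity) hCE hx hα.le hα'.le
  have hθsq : θ ^ 2 ≤ 4 * (a ^ α * w ^ (2 - α)) := by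
    have ha2 : a ^ 2 = a ^ α * a ^ (2 - α) := by
      rw [← rpow_add' (abs_nonneg _) (by norm_num), add_sub_cancel, rpow_two]
    calc θ ^ 2 = |θ| ^ 2 := (sq_abs θ).symm
      _ ≤ (2 * a) ^ 2 := by gcongr
      _ = 4 * (a ^ α * a ^ (2 - α)) := by rw [mul_pow, ha2]; norm_num
      _ ≤ 4 * (a ^ α * w ^ (2 - α)) := by gcongr
  have hbθ : 1 - β * |θ| ^ α - K * θ ^ 2 ≤ b θ := by
    have := (abs_le.1 (hb θ (by linarith))).1
    linarith
  rw [min_eq_left hLE]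
  have haα : 0 ≤ a ^ α := by positivity
  have hw0 : 0 ≤ w ^ (2 - α) := by positivity
  have hCβ : 0 ≤ C * β := mul_nonneg hC hβ
  linarith [mul_le_mul_of_nonneg_left hθα hβ, mul_le_mul_of_nonneg_left hθsq hK,
    mul_nonneg (mul_nonneg haα hE) (by linarith : 0 ≤ β * L - 6 * C * β),
    mul_nonneg (mul_nonneg haα hw0) (by linarith : 0 ≤ β * L - 4 * K)]

theorem intervalIntegrable_comp_angle {b X Y : ℝ → ℝ} {M s₀ t : ℝ} (hb : Measurable b)
    (hbM : ∀ θ, |b θ| ≤ M) (hX : ContinuousOn X (Icc s₀ t)) (hY : ContinuousOn Y (Icc s₀ t))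
    (hst : s₀ ≤ t) : IntervalIntegrable (fun s => b (angle (X s) (Y s))) volume s₀ t := by
  rw [intervalIntegrable_iff_integrableOn_Icc_of_le hst]
  refine Integrable.of_bound ?_ M (ae_of_all _ fun s => hbM _)
  exact ((hb.comp measurable_angle).comp_aemeasurable ((hX.aemeasurable measurableSet_Icc).prodMk
    (hY.aemeasurable measurableSet_Icc))).aestronglyMeasurable

theorem continuousOn_branching_deficit {Y : ℝ → ℝ} {α L p s₀ t : ℝ} (hα : 0 ≤ α)
    (hα' : α ≤ 2) (hs₀ : 0 < s₀) (hY : ContinuousOn Y (Icc s₀ t)) :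
    ContinuousOn
      (fun s => |Y s / (√2 * s)| ^ α * (1 + min (L * (|Y s / s| ^ (2 - α) + s ^ (-p))) 1))
      (Icc s₀ t) := by
  have hs : ∀ s ∈ Icc s₀ t, s ≠ 0 := fun s hs => (hs₀.trans_le hs.1).ne'
  have hsqrt : ∀ s ∈ Icc s₀ t, √2 * s ≠ 0 := fun s hs' => mul_ne_zero (by positivity) (hs s hs')
  refine ((hY.div (by fun_prop) hsqrt).abs.rpow_const fun _ _ => Or.inr hα).mul
    (continuousOn_const.add ((continuousOn_const.mul ?_).inf continuousOn_const))
  exact ((hY.div continuousOn_id hs).abs.rpow_const fun _ _ => Or.inr (by linarith)).add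
    (continuousOn_id.rpow_const fun s hs' => Or.inl (hs s hs'))

theorem sub_mul_integral_le_integral {f g : ℝ → ℝ} {a b c : ℝ} (hab : a ≤ b)
    (hf : IntervalIntegrable f volume a b) (hg : IntervalIntegrable g volume a b)
    (h : ∀ s ∈ Icc a b, 1 - c * f s ≤ g s) :
    (b - a) - c * ∫ s in a..b, f s ≤ ∫ s in a..b, g s := by
  have hf' := (intervalIntegrable_const (c := (1 : ℝ))).sub (hf.const_mul c)
  have := intervalIntegral.integral_mono_on hab hf' hg h
  rwa [intervalIntegral.integral_sub intervalIntegrable_const (hf.const_mul c),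
    intervalIntegral.integral_const_mul, intervalIntegral.integral_const, smul_eq_mul,
    mul_one] at this

theorem exists_uniform_one_sub_le_comp_angle {b : ℝ → ℝ} {α β K σ₀ lam₀ p : ℝ}
    (hb : ∀ θ, |θ| ≤ σ₀ → |b θ - (1 - β * |θ| ^ α)| ≤ K * θ ^ 2) (hα : 0 < α) (hα' : α < 2)
    (hβ : 0 < β) (hK : 0 ≤ K) (hσ₀ : 0 < σ₀) (hp : 0 < p) (hp' : p ≤ 1 / 2)
    (hpα : p ≤ 2 * α / (2 + α)) :
    ∃ σ > 0, ∃ L > 0, ∃ s₁ ≥ 1, ∀ s t x y, s₁ ≤ s → s ≤ t →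
      mCenter α β lam₀ t / t * s - s ^ (1 - p) ≤ x → |y| ≤ σ * s →
      1 - β * (|y / (√2 * s)| ^ α * (1 + min (L * (|y / s| ^ (2 - α) + s ^ (-p))) 1))
        ≤ b (angle x y) := by
  set C := |theta1 α β lam₀| + 5
  set L := 6 * C + 4 * K / β with hL_def
  have hL : 0 < L := by positivity
  have hCL : C ≤ L := by
    have : 0 ≤ 4 * K / β := by positivity
    linarith [abs_nonneg (theta1 α β lam₀)]
  have hβL : 6 * C * β + 4 * K ≤ β * L := le_of_eq (by rw [hL_def]; field_simp)
  obtain ⟨s₁, hs₁⟩ := Filter.eventually_atTop.1 ((tendsto_rpow_neg_atTop hp).eventually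
    (ge_mem_nhds (show (0 : ℝ) < (2 * L)⁻¹ by positivity)))
  set σ := min (σ₀ / 2) ((2 * L)⁻¹ ^ (2 - α)⁻¹)
  refine ⟨σ, by positivity, L, hL, max s₁ 1, le_max_right _ _, fun s t x y hs hst hx hy => ?_⟩
  have hs1 : 1 ≤ s := (le_max_right _ _).trans hs
  have hE : s ^ (-p) ≤ (2 * L)⁻¹ := hs₁ s ((le_max_left _ _).trans hs)
  have hw : |y / s| ≤ σ := by
    have hs0 : 0 < s := by linarith
    rwa [abs_div, abs_of_pos hs0, div_le_iff₀ hs0]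
  have hG : |y / s| ^ (2 - α) ≤ (2 * L)⁻¹ :=
    (le_rpow_inv_iff_of_pos (abs_nonneg _) (by positivity) (by linarith)).1
      (hw.trans (min_le_right _ _))
  refine one_sub_le_comp_angle hb hα hα' hβ.le hK (by positivity) (by positivity) ?_ hβL
    (by linarith) (sqrt_two_mul_one_sub_le_of_mCenter_le hα.le hp.le hp' hpα hs1 hst hx)
    (by linarith [hw.trans (min_le_left _ _)]) ?_
  · calc C * s ^ (-p) ≤ L * (2 * L)⁻¹ := mul_le_mul hCL hE (by positivity) hL.le
      _ = 1 / 2 := by field_simp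
  · calc L * (|y / s| ^ (2 - α) + s ^ (-p)) ≤ L * ((2 * L)⁻¹ + (2 * L)⁻¹) := by gcongr
      _ = 1 := by field_simp; ring

theorem branching_rate_lower_bound_general (α β : ℝ)
    (hα : α ∈ Set.Ioo (2/3 : ℝ) 2) (hβ : 0 < β)
    (b : ℝ → ℝ) (hb_meas : Measurable b)
    (hb_range : ∀ θ : ℝ, b θ ∈ Set.Icc (0:ℝ) 1)
    (hA2 : ∃ K : ℝ, 0 < K ∧ ∃ σ₀ : ℝ, 0 < σ₀ ∧
      ∀ θ : ℝ, |θ| ≤ σ₀ → |b θ - (1 - β * |θ| ^ α)| ≤ K * θ ^ 2)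
    (lam₀ : ℝ)
    (ε : ℝ) (hε : ε ∈ Set.Ioo (0:ℝ) (2 * (2 * α / (2 + α)) - 1)) :
    ∃ σ : ℝ, 0 < σ ∧ ∃ L : ℝ, 0 < L ∧ ∃ s₁ : ℝ, 0 < s₁ ∧
      ∀ s₀ t : ℝ, s₁ ≤ s₀ → s₀ ≤ t →
      ∀ X Y : ℝ → ℝ,
        ContinuousOn X (Set.Icc s₀ t) → ContinuousOn Y (Set.Icc s₀ t) →
        (∀ s ∈ Set.Icc s₀ t,
          (mCenter α β lam₀ t / t) * s - s ^ ((1 + ε) / 2) ≤ X s ∧ |Y s| ≤ σ * s) →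
        (t - s₀) - β * (∫ s in s₀..t, |Y s / (Real.sqrt 2 * s)| ^ α *
            (1 + min (L * (|Y s / s| ^ (2 - α) + s ^ (-((1 - ε) / 2)))) 1))
          ≤ ∫ s in s₀..t, b (angle (X s) (Y s)) := by
  obtain ⟨K, hK, σ₀, hσ₀, hb⟩ := hA2
  obtain ⟨hα₀, hα₂⟩ : 0 < α ∧ α < 2 := ⟨by linarith [hα.1], hα.2⟩
  have hκ : 2 * α / (2 + α) < 1 := by rw [div_lt_one (by linarith)]; linarith
  obtain ⟨hε₀, hεκ⟩ := hε
  obtain ⟨σ, hσ, L, hL, s₁, hs₁, hpointwise⟩ :=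
    exists_uniform_one_sub_le_comp_angle (lam₀ := lam₀) (p := (1 - ε) / 2) hb hα₀ hα₂ hβ hK.le
      hσ₀ (by linarith) (by linarith) (by linarith)
  refine ⟨σ, hσ, L, hL, s₁, by linarith, fun s₀ t hs₀ hst X Y hX hY hXY => ?_⟩
  have hbM (θ : ℝ) : |b θ| ≤ 1 := abs_le.2 ⟨by linarith [(hb_range θ).1], (hb_range θ).2⟩
  refine sub_mul_integral_le_integral hst
    ((continuousOn_branching_deficit hα₀.le hα₂.le (by linarith) hY).intervalIntegrable_of_Icc hst)
    (intervalIntegrable_comp_angle hb_meas hbM hX hY hst) fun s hs => ?_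
  obtain ⟨hXs, hYs⟩ := hXY s hs
  rw [show (1 + ε) / 2 = 1 - (1 - ε) / 2 by ring] at hXs
  exact hpointwise s t _ _ (hs₀.trans hs.1) hs.2 hXs hYs

/-- Lower bound on the branching rate along trajectories staying above
`s ↦ (m(t)/t) s - s^{(1+ε)/2}` with `|Y_s| ≤ σ s`:
`∫_{s₀}^t b(θ_s) ds ≥ (t - s₀)
  - β ∫_{s₀}^t |Y_s/(√2 s)|^α (1 + min(L(|Y_s/s|^{2-α} + s^{-(1-ε)/2}), 1)) ds`. -/
theorem branching_rate_lower_bound (α β : ℝ)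
    (hα : α ∈ Set.Ioo (2/3 : ℝ) 2) (hβ : 0 < β)
    (b : ℝ → ℝ) (hb_meas : Measurable b)
    (hb_range : ∀ θ : ℝ, b θ ∈ Set.Icc (0:ℝ) 1)
    (hb_per : ∀ θ : ℝ, b (θ + 2 * Real.pi) = b θ)
    (hA1 : ∀ ε ∈ Set.Ioc (0:ℝ) Real.pi, ∃ c : ℝ, c < 1 ∧
      ∀ θ ∈ Set.Icc (-Real.pi) Real.pi, ε ≤ |θ| → b θ ≤ c)
    (hA2 : ∃ K : ℝ, 0 < K ∧ ∃ σ₀ : ℝ, 0 < σ₀ ∧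
      ∀ θ : ℝ, |θ| ≤ σ₀ → |b θ - (1 - β * |θ| ^ α)| ≤ K * θ ^ 2)
    (lam₀ : ℝ) (hlam₀ : 0 < lam₀)
    (hground : ∃ φ₀ : ℝ → ℝ, ContDiff ℝ 2 φ₀ ∧ (∀ x : ℝ, 0 < φ₀ x) ∧
      (∫ x : ℝ, (φ₀ x) ^ 2) = 1 ∧
      ∀ x : ℝ, -(deriv (deriv φ₀) x) + |x| ^ α * φ₀ x = lam₀ * φ₀ x)
    (ε : ℝ) (hε : ε ∈ Set.Ioo (0:ℝ) (2 * (2 * α / (2 + α)) - 1)) :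
    ∃ σ : ℝ, 0 < σ ∧ ∃ L : ℝ, 0 < L ∧ ∃ s₁ : ℝ, 0 < s₁ ∧
      ∀ s₀ t : ℝ, s₁ ≤ s₀ → s₀ ≤ t →
      ∀ X Y : ℝ → ℝ,
        ContinuousOn X (Set.Icc s₀ t) → ContinuousOn Y (Set.Icc s₀ t) →
        (∀ s ∈ Set.Icc s₀ t,
          (mCenter α β lam₀ t / t) * s - s ^ ((1 + ε) / 2) ≤ X s ∧ |Y s| ≤ σ * s) →
        (t - s₀) - β * (∫ s in s₀..t, |Y s / (Real.sqrt 2 * s)| ^ α *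
            (1 + min (L * (|Y s / s| ^ (2 - α) + s ^ (-((1 - ε) / 2)))) 1))
          ≤ ∫ s in s₀..t, b (angle (X s) (Y s)) :=
  branching_rate_lower_bound_general α β hα hβ b hb_meas hb_range hA2 lam₀ ε hε
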